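/- arXiv:1409.7525 — 3 statements merged into one kernel-verified Lean document; each statement's English description precedes it below -/
import Mathlib

section
/- For all natural numbers k and l, (k+l)! / ((2(k+l))! · l!) = 4^{-k} · 1 / ((2l)! · (l + 1/2)_k), where (a)_k denotes the Pochhammer symbol (rising factorial) (a)_k = a(a+1)···(a+k-1). -/
/-! Splitting the product `(2l+1)(2l+2)⋯(2l+2k) = (2(l+k))! / (2l)!` into its odd and even
factors gives `4^k (l + 1/2)_k (l + 1)_k`, and `(l + 1)_k = (l+k)! / l!`. -/

open Nat Polynomial

theorem ascPochhammer_eval_two_mul {K : Type*} [Field K] [NeZero (2 : K)] (x : K) (k : ℕ) :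
    (ascPochhammer K (2 * k)).eval (2 * x) =
      4 ^ k * (ascPochhammer K k).eval x * (ascPochhammer K k).eval (x + 1 / 2) := by
  induction k with
  | zero => simp
  | succ k ih =>
    have h2 : (2 : K) ≠ 0 := two_ne_zero
    rw [mul_add_one, ascPochhammer_succ_eval, ascPochhammer_succ_eval, ih,
      ascPochhammer_succ_eval, ascPochhammer_succ_eval]
    field_simp
    push_cast
    ring

theorem factorial_two_mul_add_mul_factorial {K : Type*} [Field K] [NeZero (2 : K)] (l k : ℕ) :
    ((2 * (l + k))! : K) * l ! =
      4 ^ k * (2 * l)! * (l + k)! * (ascPochhammer K k).eval ((l : K) + 1 / 2) := by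
  have hodd := factorial_mul_ascPochhammer K (2 * l) (2 * k)
  have heven := factorial_mul_ascPochhammer K l k
  rw [show ((2 * l : ℕ) : K) + 1 = 2 * ((l : K) + 1 / 2) by
      rw [mul_add, mul_one_div_cancel two_ne_zero]; push_cast; ring,
    ascPochhammer_eval_two_mul, add_assoc, add_halves, ← mul_add] at hodd
  rw [← hodd, ← heven]
  ring

theorem factorial_ratio_pochhammer (k l : ℕ) :
    ((k + l).factorial : ℝ) / ((2 * (k + l)).factorial * l.factorial) =
      (4 : ℝ) ^ (-(k : ℤ)) *
        (1 / ((2 * l).factorial * (ascPochhammer ℝ k).eval ((l : ℝ) + 1 / 2))) := by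
  have hP : 0 < (ascPochhammer ℝ k).eval ((l : ℝ) + 1 / 2) := ascPochhammer_pos _ _ (by positivity)
  rw [zpow_neg, zpow_natCast, add_comm k l, div_eq_iff (by positivity),
    factorial_two_mul_add_mul_factorial]
  generalize (ascPochhammer ℝ k).eval ((l : ℝ) + 1 / 2) = P at hP ⊢
  field_simp
end

section
/- For every real k > 0 and positive integer ν, ν²·(1 − sin(k/ν)/(k/ν)) = k² ∫_{[0,1]²} u² v · sinc(k u v / ν) du dv, where sinc(x) = sin(x)/x for x ≠ 0 and sinc(0) = 1. -/
open MeasureTheory intervalIntegral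

/-- `sinc x = sin x / x` for `x ≠ 0`, and `sinc 0 = 1`. -/
noncomputable def sinc (x : ℝ) : ℝ := if x = 0 then 1 else Real.sin x / x

/-! Since `x * sinc x = sin x` everywhere, the inner integral is an integral of `sin` and the outer
one an integral of `1 - cos`, both evaluated by their antiderivatives: with `c = k / ν`,
`c² ∫₀¹ u² v sinc (c u v) dv = 1 - cos (c u)` and `c ∫₀¹ (1 - cos (c u)) du = c - sin c`. -/

theorem mul_sinc (x : ℝ) : x * sinc x = Real.sin x := by
  rcases eq_or_ne x 0 with rfl | hx
  · simp
  · rw [sinc, if_neg hx, mul_div_cancel₀ _ hx]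

theorem sq_mul_integral_mul_sinc_mul (a x : ℝ) :
    a ^ 2 * ∫ v in (0:ℝ)..x, v * sinc (a * v) = 1 - Real.cos (a * x) := by
  have hderiv : ∀ v ∈ Set.uIcc 0 x,
      HasDerivAt (fun v => -Real.cos (a * v)) (a * Real.sin (a * v)) v := by
    intro v _
    exact ((hasDerivAt_id' v).const_mul a).cos.fun_neg.congr_deriv (by ring)
  calc a ^ 2 * ∫ v in (0:ℝ)..x, v * sinc (a * v)
      = ∫ v in (0:ℝ)..x, a * Real.sin (a * v) := by
        rw [← intervalIntegral.integral_const_mul]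
        congr 1 with v
        rw [← mul_sinc]
        ring
    _ = 1 - Real.cos (a * x) := by
        rw [integral_eq_sub_of_hasDerivAt hderiv (Continuous.intervalIntegrable (by fun_prop) _ _)]
        simp only [mul_zero, Real.cos_zero]
        ring

theorem mul_integral_one_sub_cos_mul (a x : ℝ) :
    a * ∫ u in (0:ℝ)..x, (1 - Real.cos (a * u)) = a * x - Real.sin (a * x) := by
  have hderiv : ∀ u ∈ Set.uIcc 0 x,
      HasDerivAt (fun u => a * u - Real.sin (a * u)) (a * (1 - Real.cos (a * u))) u := by
    intro u _
    have hlin := (hasDerivAt_id' u).const_mul a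
    exact (hlin.fun_sub hlin.sin).congr_deriv (by ring)
  rw [← intervalIntegral.integral_const_mul,
    integral_eq_sub_of_hasDerivAt hderiv (Continuous.intervalIntegrable (by fun_prop) _ _)]
  simp

theorem sin_ratio_eq_double_integral (k : ℝ) (hk : 0 < k) (ν : ℕ) (hν : 0 < ν) :
    (ν : ℝ) ^ 2 * (1 - Real.sin (k / ν) / (k / ν)) =
      k ^ 2 * ∫ u in (0:ℝ)..1, ∫ v in (0:ℝ)..1, u ^ 2 * v * sinc (k * u * v / ν) := by
  set c := k / ν with hc
  have hν' : (ν : ℝ) ≠ 0 := Nat.cast_ne_zero.2 hν.ne'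
  have hc0 : c ≠ 0 := div_ne_zero hk.ne' hν'
  have inner (u : ℝ) :
      c ^ 2 * ∫ v in (0:ℝ)..1, u ^ 2 * v * sinc (k * u * v / ν) = 1 - Real.cos (c * u) := by
    have hrw : ∀ v : ℝ, u ^ 2 * v * sinc (k * u * v / ν) = u ^ 2 * (v * sinc (c * u * v)) := by
      intro v
      rw [hc, show k * u * v / ν = k / ν * u * v by ring, mul_assoc]
    simp_rw [hrw, intervalIntegral.integral_const_mul, ← mul_assoc, ← mul_pow]
    simpa using sq_mul_integral_mul_sinc_mul (c * u) 1
  have outer : c ^ 2 * ∫ u in (0:ℝ)..1, ∫ v in (0:ℝ)..1, u ^ 2 * v * sinc (k * u * v / ν)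
      = 1 - Real.sin c / c := by
    rw [← intervalIntegral.integral_const_mul]
    simp_rw [inner]
    have h := mul_integral_one_sub_cos_mul c 1
    rw [mul_one] at h
    field_simp
    linear_combination h
  have hk2 : k ^ 2 = (ν : ℝ) ^ 2 * c ^ 2 := by rw [hc]; field_simp
  rw [hk2, mul_assoc, outer]
end

section
/- Let X be a nontrivial complex Hilbert space, A ∈ L(X) bounded and self-adjoint with spectrum σ(A), R > ‖A‖, and f : U_R(0) → ℂ holomorphic on the open disc of radius R. Then the series Σ_{k=0}^∞ (f^{(k)}(0)/k!) A^k is absolutely convergent in the operator norm and equals f(A), the continuous functional calculus applied to f restricted to σ(A). -/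
/-!
The Taylor coefficients `c k` of `f` at `0` satisfy `∑ ‖c k‖ ‖A‖ ^ k < ∞`, since the Taylor series
converges at the point `‖A‖ < R`. This bounds `‖c k • A ^ k‖`, and by the Weierstrass M-test the
Taylor polynomials converge to `f` uniformly on `σ(A) ⊆ closedBall 0 ‖A‖`. The continuous
functional calculus is continuous for uniform convergence on the spectrum and sends the Taylor
polynomials to the partial sums of `∑ c k • A ^ k`, so both limits agree.
-/

open Filter Finset

theorem summable_norm_smul_pow {𝕜 A : Type*} [NormedField 𝕜] [NormedRing A] [NormOneClass A]
    [NormedAlgebra 𝕜 A] {c : ℕ → 𝕜} (a : A) (hc : Summable fun k => ‖c k‖ * ‖a‖ ^ k) :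
    Summable fun k => ‖c k • a ^ k‖ :=
  hc.of_nonneg_of_le (fun _ => norm_nonneg _) fun k =>
    (norm_smul_le _ _).trans <| mul_le_mul_of_nonneg_left (norm_pow_le a k) (norm_nonneg _)

theorem Complex.hasSum_taylorCoeff_mul_pow {f : ℂ → ℂ} {R : ℝ}
    (hf : DifferentiableOn ℂ f (Metric.ball 0 R)) {z : ℂ} (hz : z ∈ Metric.ball 0 R) :
    HasSum (fun k => iteratedDeriv k f 0 / k.factorial * z ^ k) (f z) := by
  refine (hasSum_taylorSeries_on_ball hf hz).congr_fun fun k => ?_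
  simp only [sub_zero, smul_eq_mul]
  ring

section CStarAlgebra

variable {A : Type*} [CStarAlgebra A]

theorem cfc_sum_range_mul_pow (c : ℕ → ℂ) (a : A) [IsStarNormal a] (n : ℕ) :
    cfc (fun z => ∑ k ∈ range n, c k * z ^ k) a = ∑ k ∈ range n, c k • a ^ k := by
  rw [← Finset.sum_fn, cfc_sum ..]
  exact sum_congr rfl fun k _ => by rw [cfc_const_mul .., cfc_pow_id ..]

theorem cfc_eq_tsum_smul_pow [Nontrivial A] {c : ℕ → ℂ} {f : ℂ → ℂ} {a : A} [IsStarNormal a]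
    (hc : Summable fun k => ‖c k‖ * ‖a‖ ^ k)
    (hf : ∀ z ∈ spectrum ℂ a, HasSum (fun k => c k * z ^ k) (f z)) :
    cfc f a = ∑' k, c k • a ^ k := by
  have hbound : ∀ k, ∀ z ∈ spectrum ℂ a, ‖c k * z ^ k‖ ≤ ‖c k‖ * ‖a‖ ^ k := fun k z hz => by
    rw [norm_mul, norm_pow]
    gcongr
    exact spectrum.norm_le_norm_of_mem hz
  have hunif : TendstoUniformlyOn (fun n z => ∑ k ∈ range n, c k * z ^ k) f atTop
      (spectrum ℂ a) :=
    (tendstoUniformlyOn_tsum_nat hc hbound).congr_right fun z hz => (hf z hz).tsum_eq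
  have hlim := tendsto_cfc_fun hunif (Eventually.of_forall fun n => by fun_prop)
  simp only [cfc_sum_range_mul_pow] at hlim
  exact tendsto_nhds_unique hlim (summable_norm_smul_pow a hc).of_norm.hasSum.tendsto_sum_nat

end CStarAlgebra

/-- Holomorphic functional calculus: for a bounded self-adjoint operator `A`
and `f` holomorphic on a disc of radius `R > ‖A‖`, the Taylor series of `f`
applied to `A` is absolutely summable in operator norm and sums to `f(A)`
(continuous functional calculus). -/
theorem holomorphic_functional_calculus
    {H : Type*} [NormedAddCommGroup H] [InnerProductSpace ℂ H] [CompleteSpace H]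
    [Nontrivial H]
    (A : H →L[ℂ] H) (hA : IsSelfAdjoint A)
    (R : ℝ) (hR : ‖A‖ < R)
    (f : ℂ → ℂ) (hf : DifferentiableOn ℂ f (Metric.ball 0 R)) :
    Summable (fun k : ℕ => ‖(iteratedDeriv k f 0 / (k.factorial : ℂ)) • A ^ k‖) ∧
    cfc f A = ∑' k : ℕ, (iteratedDeriv k f 0 / (k.factorial : ℂ)) • A ^ k := by
  have : IsStarNormal A := hA.isStarNormal
  have hc : Summable fun k => ‖iteratedDeriv k f 0 / (k.factorial : ℂ)‖ * ‖A‖ ^ k := by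
    have hnormA : ((‖A‖ : ℝ) : ℂ) ∈ Metric.ball 0 R := by simpa using hR
    simpa using (Complex.hasSum_taylorCoeff_mul_pow hf hnormA).summable.norm
  refine ⟨summable_norm_smul_pow A hc, cfc_eq_tsum_smul_pow hc fun z hz => ?_⟩
  exact Complex.hasSum_taylorCoeff_mul_pow hf <|
    mem_ball_zero_iff.mpr ((spectrum.norm_le_norm_of_mem hz).trans_lt hR)
end
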